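/- Let α₁, β₁, α₁', β₁', α₂, β₂, α₂', β₂' be integers with α₁β₁' − α₁'β₁ = 1 and such that the matrix A₁ · diag(−1,1) · A₂⁻¹ (with Aᵢ = [[αᵢ,βᵢ],[αᵢ',βᵢ']] ∈ SL(2,ℤ)) equals [[1, p],[s, −1]] for some integers p, s. Then with d = α₁', we have d·(−β₁/α₁) ≡ 1/α₁ (mod ℤ), d·(−β₂/α₂) ≡ 1/α₂ (mod ℤ), and d·(−β₁/α₁ − β₂/α₂) = 1/α₁ + 1/α₂. -/

import Mathlib

/-!
The determinant condition for `A₁` and the `(2,2)` entry of `A₁ · diag(-1, 1) · A₂⁻¹` both have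
the shape `a * e - c * b = 1`, and for `a ≠ 0` this says exactly `c * (-b / a) - 1 / a = -e`.
With `c = α₁'` this gives the two congruences, with the integers `-β₁'` and `β₁'`; as these
cancel, the two congruences add up to the equality.
-/

theorem mul_neg_div_sub_one_div_eq_neg {K : Type*} [Field K] {a b c e : K} (ha : a ≠ 0)
    (h : a * e - c * b = 1) : c * (-b / a) - 1 / a = -e := by
  field_simp
  linear_combination h

theorem stmt_7_general (α₁ β₁ α₁' β₁' α₂ β₂ : ℤ)
    (hα₁ : 1 ≤ α₁) (hα₂ : 1 ≤ α₂)
    (hA₁ : α₁ * β₁' - α₁' * β₁ = 1)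
    (h22 : α₁' * β₂ + α₂ * β₁' = -1) :
    (∃ z : ℤ, (α₁' : ℚ) * (-(β₁ : ℚ) / α₁) - 1 / α₁ = z) ∧
    (∃ z : ℤ, (α₁' : ℚ) * (-(β₂ : ℚ) / α₂) - 1 / α₂ = z) ∧
    (α₁' : ℚ) * (-(β₁ : ℚ) / α₁ - (β₂ : ℚ) / α₂) = 1 / α₁ + 1 / α₂ := by
  have h₁ : (α₁' : ℚ) * (-(β₁ : ℚ) / α₁) - 1 / α₁ = -β₁' :=
    mul_neg_div_sub_one_div_eq_neg (by positivity) (by exact_mod_cast hA₁)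
  have h₂ : (α₁' : ℚ) * (-(β₂ : ℚ) / α₂) - 1 / α₂ = -(-β₁' : ℚ) :=
    mul_neg_div_sub_one_div_eq_neg (by positivity)
      (by exact_mod_cast (by linarith : α₂ * -β₁' - α₁' * β₂ = 1))
  refine ⟨⟨-β₁', by rw [h₁]; push_cast; ring⟩, ⟨β₁', by rw [h₂]; ring⟩, ?_⟩
  linear_combination h₁ + h₂

theorem stmt_7 (α₁ β₁ α₁' β₁' α₂ β₂ α₂' β₂' p : ℤ)
    (hα₁ : 1 ≤ α₁) (hα₂ : 1 ≤ α₂)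
    (hA₁ : α₁ * β₁' - α₁' * β₁ = 1) (hA₂ : α₂ * β₂' - α₂' * β₂ = 1)
    (h22 : α₁' * β₂ + α₂ * β₁' = -1) (h12 : α₁ * β₂ + α₂ * β₁ = p) :
    (∃ z : ℤ, (α₁' : ℚ) * (-(β₁ : ℚ) / α₁) - 1 / α₁ = z) ∧
    (∃ z : ℤ, (α₁' : ℚ) * (-(β₂ : ℚ) / α₂) - 1 / α₂ = z) ∧
    (α₁' : ℚ) * (-(β₁ : ℚ) / α₁ - (β₂ : ℚ) / α₂) = 1 / α₁ + 1 / α₂ :=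
  stmt_7_general α₁ β₁ α₁' β₁' α₂ β₂ hα₁ hα₂ hA₁ h22
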